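/- Let f : ℝ^d → ℝ be convex and differentiable and satisfy the block-Lipschitz assumption. Then for every α > 0 and all x, y ∈ ℝ^d: f(y) − f(x) ≤ ⟨∇f(x), y − x⟩ + (α/4)·(y − x)^⊤ Q̃ (y − x) + (1/(2α))‖y − x‖². -/

import Mathlib

noncomputable section
open MeasureTheory Finset Set RealInnerProductSpace

abbrev Euc (d : ℕ) := EuclideanSpace ℝ (Fin d)

def blockMask {d m : ℕ} (blk : Fin d → Fin m) (j : Fin m) (z : Euc d) : Euc d :=
  (EuclideanSpace.equiv (Fin d) ℝ).symm fun i => if blk i = j then z i else 0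

def blockCombine {d m : ℕ} (blk : Fin d → Fin m) (j : ℕ) (x y : Euc d) : Euc d :=
  (EuclideanSpace.equiv (Fin d) ℝ).symm fun i => if (blk i : ℕ) + 1 ≤ j then x i else y i

def quadForm {d : ℕ} (Q : Matrix (Fin d) (Fin d) ℝ) (z : Euc d) : ℝ :=
  ∑ i, ∑ i', Q i i' * z i * z i'

def keepGE {d m : ℕ} (blk : Fin d → Fin m) (j : ℕ) (Q : Matrix (Fin d) (Fin d) ℝ) :
    Matrix (Fin d) (Fin d) ℝ :=
  Matrix.of fun i i' => if j ≤ (blk i : ℕ) + 1 ∧ j ≤ (blk i' : ℕ) + 1 then Q i i' else 0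

def Qtilde {d m : ℕ} (blk : Fin d → Fin m) (Q : Fin m → Matrix (Fin d) (Fin d) ℝ) :
    Matrix (Fin d) (Fin d) ℝ :=
  ∑ j : Fin m, (keepGE blk ((j : ℕ) + 1) (Q j) + keepGE blk ((j : ℕ) + 2) (Q j))

def specNorm {d : ℕ} (Q : Matrix (Fin d) (Fin d) ℝ) : ℝ :=
  ‖Matrix.toEuclideanCLM (𝕜 := ℝ) Q‖

def bigL {d m : ℕ} (blk : Fin d → Fin m) (Q : Fin m → Matrix (Fin d) (Fin d) ℝ) : ℝ :=
  Real.sqrt (2 * specNorm (Qtilde blk Q))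

def BlockLip {d m : ℕ} (blk : Fin d → Fin m) (f : Euc d → ℝ)
    (Q : Fin m → Matrix (Fin d) (Fin d) ℝ) : Prop :=
  ∀ (j : Fin m) (x y : Euc d),
    ‖blockMask blk j (gradient f x) - blockMask blk j (gradient f y)‖ ^ 2 ≤
      quadForm (Q j) (x - y)

def SubgradStrongConvex {d : ℕ} (γ : ℝ) (g : Euc d → ℝ) : Prop :=
  ∀ x y s : Euc d, (∀ z, g x + ⟪s, z - x⟫ ≤ g z) →
    g x + ⟪s, y - x⟫ + γ / 2 * ‖y - x‖ ^ 2 ≤ g y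

/-!
Walk from `y` to `x` one block at a time through the hybrid points `blockCombine blk k x y`
(`x` on blocks `< k`, `y` on the others) and telescope. On the `j`-th leg only block `j` moves,
so the slope of `f` sees only `∇^(j) f`; comparing it with `∇^(j) f x` by Cauchy–Schwarz, Young
with weight `α` and the block-Lipschitz bound costs `α/2 ‖z - x‖²_{Q^j}`. Along the leg `z - x`
moves linearly between `y - x` cut to the blocks `> j` and to the blocks `≥ j`, so convexity of
the quadratic form averages that cost to `α/4` times the sum of its two endpoint values — the
`(Q^j)_{≥j+1}` and `(Q^j)_{≥j}` terms of `Q̃`.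
-/

section Quadratic

variable {d : ℕ}

lemma quadForm_add (A B : Matrix (Fin d) (Fin d) ℝ) (z : Euc d) :
    quadForm (A + B) z = quadForm A z + quadForm B z := by
  simp only [quadForm, Matrix.add_apply, add_mul, Finset.sum_add_distrib]

lemma quadForm_sum {ι : Type*} [Fintype ι] (M : ι → Matrix (Fin d) (Fin d) ℝ) (z : Euc d) :
    quadForm (∑ j, M j) z = ∑ j, quadForm (M j) z := by
  simp only [quadForm, Matrix.sum_apply, Finset.sum_mul]
  exact (Finset.sum_congr rfl fun i _ => Finset.sum_comm).trans Finset.sum_comm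

lemma quadForm_nonneg {Q : Matrix (Fin d) (Fin d) ℝ} (hQ : Q.PosSemidef) (z : Euc d) :
    0 ≤ quadForm Q z := by
  refine (hQ.dotProduct_mulVec_nonneg (fun i => z i)).trans_eq ?_
  simp only [star_trivial, dotProduct, Matrix.mulVec, quadForm, Finset.mul_sum]
  exact Finset.sum_congr rfl fun i _ => Finset.sum_congr rfl fun i' _ => by ring

lemma quadForm_convexOn {Q : Matrix (Fin d) (Fin d) ℝ} (hQ : Q.PosSemidef) :
    ConvexOn ℝ univ (quadForm Q) := by
  refine ⟨convex_univ, fun x _ y _ a b _ _ hab => ?_⟩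
  obtain rfl : b = 1 - a := by linarith
  have parallelogram : quadForm Q (a • x + (1 - a) • y) + a * (1 - a) * quadForm Q (x - y)
      = a * quadForm Q x + (1 - a) * quadForm Q y := by
    simp only [quadForm, Finset.mul_sum, ← Finset.sum_add_distrib, PiLp.add_apply,
      PiLp.sub_apply, PiLp.smul_apply, smul_eq_mul]
    exact Finset.sum_congr rfl fun i _ => Finset.sum_congr rfl fun i' _ => by ring
  simp only [smul_eq_mul]
  nlinarith [mul_nonneg (mul_nonneg ‹0 ≤ a› ‹0 ≤ 1 - a›) (quadForm_nonneg hQ (x - y))]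

end Quadratic

lemma real_inner_le_mul_norm_sq_add {E : Type*} [NormedAddCommGroup E] [InnerProductSpace ℝ E]
    {α : ℝ} (hα : 0 < α) (p v : E) :
    ⟪p, v⟫ ≤ α / 2 * ‖p‖ ^ 2 + 1 / (2 * α) * ‖v‖ ^ 2 := by
  have young : ‖p‖ * ‖v‖ ≤ α / 2 * ‖p‖ ^ 2 + 1 / (2 * α) * ‖v‖ ^ 2 := by
    rw [← sub_nonneg]
    have e : α / 2 * ‖p‖ ^ 2 + 1 / (2 * α) * ‖v‖ ^ 2 - ‖p‖ * ‖v‖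
        = (α * ‖p‖ - ‖v‖) ^ 2 / (2 * α) := by
      field_simp; ring
    rw [e]; positivity
  exact (real_inner_le_norm p v).trans young

lemma sub_le_of_hasDerivAt_le_affine {φ φ' : ℝ → ℝ} {a b : ℝ}
    (hφ : ∀ t ∈ Icc (0 : ℝ) 1, HasDerivAt φ (φ' t) t)
    (hle : ∀ t ∈ Icc (0 : ℝ) 1, φ' t ≤ a + b * t) :
    φ 1 - φ 0 ≤ a + b / 2 := by
  let ψ : ℝ → ℝ := fun t => a * t + b / 2 * t ^ 2 - φ t
  have hψ : ∀ t ∈ Icc (0 : ℝ) 1, HasDerivAt ψ (a + b * t - φ' t) t := fun t ht =>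
    ((((hasDerivAt_id t).const_mul a).add ((hasDerivAt_pow 2 t).const_mul (b / 2))).sub
      (hφ t ht)).congr_deriv (by simp; ring)
  have hmono : MonotoneOn ψ (Icc 0 1) := by
    refine monotoneOn_of_hasDerivWithinAt_nonneg (convex_Icc 0 1)
      (fun t ht => (hψ t ht).continuousAt.continuousWithinAt)
      (fun t ht => (hψ t (interior_subset ht)).hasDerivWithinAt) fun t ht => ?_
    linarith [hle t (interior_subset ht)]
  have := hmono (left_mem_Icc.2 zero_le_one) (right_mem_Icc.2 zero_le_one) zero_le_one
  simp only [ψ] at this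
  linarith

lemma hasDerivAt_apply_add_smul {E : Type*} [NormedAddCommGroup E] [InnerProductSpace ℝ E]
    [CompleteSpace E] {f : E → ℝ} {w v : E} {t : ℝ} (hf : DifferentiableAt ℝ f (w + t • v)) :
    HasDerivAt (fun s : ℝ => f (w + s • v)) ⟪gradient f (w + t • v), v⟫ t := by
  have hline : HasDerivAt (fun s : ℝ => w + s • v) v t := by
    simpa using ((hasDerivAt_id t).smul_const v).const_add w
  exact (hf.hasGradientAt.hasFDerivAt.comp_hasDerivAt t hline).congr_deriv (by simp)

section Blocks

variable {d m : ℕ} (blk : Fin d → Fin m)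

lemma blockMask_apply (j : Fin m) (z : Euc d) (i : Fin d) :
    blockMask blk j z i = if blk i = j then z i else 0 := rfl

lemma blockCombine_apply (k : ℕ) (x y : Euc d) (i : Fin d) :
    blockCombine blk k x y i = if (blk i : ℕ) + 1 ≤ k then x i else y i := rfl

-- Blocks are 0-based here and 1-based in `keepGE`: see `quadForm_blockTail`.
def blockTail (k : ℕ) (z : Euc d) : Euc d :=
  (EuclideanSpace.equiv (Fin d) ℝ).symm fun i => if k ≤ (blk i : ℕ) then z i else 0

lemma blockTail_apply (k : ℕ) (z : Euc d) (i : Fin d) :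
    blockTail blk k z i = if k ≤ (blk i : ℕ) then z i else 0 := rfl

lemma blockCombine_sub_left (k : ℕ) (x y : Euc d) :
    blockCombine blk k x y - x = blockTail blk k (y - x) := by
  ext i
  simp only [PiLp.sub_apply, blockCombine_apply, blockTail_apply]
  split_ifs <;> first | omega | ring

lemma blockCombine_zero (x y : Euc d) : blockCombine blk 0 x y = y := by
  ext i
  simp [blockCombine_apply]

lemma blockCombine_of_le {k : ℕ} (hk : m ≤ k) (x y : Euc d) : blockCombine blk k x y = x := by
  ext i
  simp only [blockCombine_apply, ite_eq_left_iff]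
  omega

lemma blockTail_succ_add_blockMask (j : Fin m) (z : Euc d) :
    blockTail blk ((j : ℕ) + 1) z + blockMask blk j z = blockTail blk j z := by
  ext i
  simp only [PiLp.add_apply, blockTail_apply, blockMask_apply, Fin.ext_iff]
  split_ifs <;> first | omega | ring

lemma quadForm_blockTail (k : ℕ) (Q : Matrix (Fin d) (Fin d) ℝ) (z : Euc d) :
    quadForm Q (blockTail blk k z) = quadForm (keepGE blk (k + 1) Q) z := by
  unfold quadForm keepGE
  refine Finset.sum_congr rfl fun i _ => Finset.sum_congr rfl fun i' _ => ?_
  simp only [blockTail_apply, Matrix.of_apply, add_le_add_iff_right]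
  split_ifs <;> simp_all

lemma blockMask_blockMask (j : Fin m) (z : Euc d) :
    blockMask blk j (blockMask blk j z) = blockMask blk j z := by
  ext i
  simp only [blockMask_apply]
  split_ifs <;> rfl

lemma inner_blockMask_left (j : Fin m) (g z : Euc d) :
    ⟪blockMask blk j g, z⟫ = ⟪g, blockMask blk j z⟫ := by
  simp only [PiLp.inner_apply, blockMask_apply]
  refine Finset.sum_congr rfl fun i _ => ?_
  split_ifs <;> simp

lemma sum_blockMask (z : Euc d) : ∑ j, blockMask blk j z = z := by
  ext i
  simp [blockMask_apply]

lemma sum_norm_blockMask_sq (z : Euc d) : ∑ j, ‖blockMask blk j z‖ ^ 2 = ‖z‖ ^ 2 := by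
  simp only [EuclideanSpace.real_norm_sq_eq, blockMask_apply, ite_pow]
  rw [Finset.sum_comm]
  simp

end Blocks

section BlockDescent

variable {d m : ℕ} {blk : Fin d → Fin m} {f : Euc d → ℝ} {Q : Fin m → Matrix (Fin d) (Fin d) ℝ}
  {α : ℝ}

lemma inner_gradient_sub_le (hlip : BlockLip blk f Q) (hα : 0 < α) (j : Fin m) (z x v : Euc d)
    (hv : blockMask blk j v = v) :
    ⟪gradient f z - gradient f x, v⟫ ≤ α / 2 * quadForm (Q j) (z - x) + 1 / (2 * α) * ‖v‖ ^ 2 :=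
  calc ⟪gradient f z - gradient f x, v⟫
      = ⟪blockMask blk j (gradient f z) - blockMask blk j (gradient f x), v⟫ := by
        rw [inner_sub_left, inner_sub_left, inner_blockMask_left, inner_blockMask_left, hv]
    _ ≤ α / 2 * ‖blockMask blk j (gradient f z) - blockMask blk j (gradient f x)‖ ^ 2
        + 1 / (2 * α) * ‖v‖ ^ 2 := real_inner_le_mul_norm_sq_add hα _ _
    _ ≤ α / 2 * quadForm (Q j) (z - x) + 1 / (2 * α) * ‖v‖ ^ 2 := by
        gcongr
        exact hlip j z x

lemma sub_blockCombine_succ_le (hdiff : Differentiable ℝ f) (hlip : BlockLip blk f Q)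
    (hα : 0 < α) (j : Fin m) (hQ : (Q j).PosSemidef) (x y : Euc d) :
    f (blockCombine blk j x y) - f (blockCombine blk ((j : ℕ) + 1) x y) ≤
      ⟪gradient f x, blockMask blk j (y - x)⟫
        + α / 4 * (quadForm (keepGE blk ((j : ℕ) + 1) (Q j)) (y - x)
          + quadForm (keepGE blk ((j : ℕ) + 2) (Q j)) (y - x))
        + 1 / (2 * α) * ‖blockMask blk j (y - x)‖ ^ 2 := by
  set v := blockMask blk j (y - x)
  set u := blockTail blk ((j : ℕ) + 1) (y - x)
  set w := blockCombine blk ((j : ℕ) + 1) x y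
  have hw : w = x + u := eq_add_of_sub_eq' (blockCombine_sub_left blk _ x y)
  have huv : u + v = blockTail blk j (y - x) := blockTail_succ_add_blockMask blk j (y - x)
  have hwv : blockCombine blk j x y = w + v := by
    rw [hw, add_assoc, huv, ← blockCombine_sub_left]; abel
  have hq : ∀ t ∈ Icc (0 : ℝ) 1, quadForm (Q j) (w + t • v - x)
      ≤ (1 - t) * quadForm (Q j) u + t * quadForm (Q j) (u + v) := by
    rintro t ⟨ht0, ht1⟩
    have hseg : w + t • v - x = (1 - t) • u + t • (u + v) := by rw [hw]; module
    rw [hseg]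
    exact (quadForm_convexOn hQ).2 (mem_univ _) (mem_univ _) (by linarith) ht0 (by ring)
  have hslope : ∀ t ∈ Icc (0 : ℝ) 1, ⟪gradient f (w + t • v), v⟫
      ≤ (⟪gradient f x, v⟫ + α / 2 * quadForm (Q j) u + 1 / (2 * α) * ‖v‖ ^ 2)
        + α / 2 * (quadForm (Q j) (u + v) - quadForm (Q j) u) * t := by
    intro t ht
    have hgrad := inner_gradient_sub_le hlip hα j (w + t • v) x v (blockMask_blockMask blk j _)
    have hαq := mul_le_mul_of_nonneg_left (hq t ht) (by positivity : 0 ≤ α / 2)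
    rw [inner_sub_left] at hgrad
    linarith
  have hline := sub_le_of_hasDerivAt_le_affine
    (fun t _ => hasDerivAt_apply_add_smul (hdiff (w + t • v))) hslope
  have hqu : quadForm (Q j) u = quadForm (keepGE blk ((j : ℕ) + 2) (Q j)) (y - x) :=
    quadForm_blockTail blk _ _ _
  have hquv : quadForm (Q j) (u + v) = quadForm (keepGE blk ((j : ℕ) + 1) (Q j)) (y - x) := by
    rw [huv, quadForm_blockTail]
  simp only [one_smul, zero_smul, add_zero] at hline
  rw [hwv, ← hqu, ← hquv]
  linarith

end BlockDescent

theorem stmt2_general {d m : ℕ} (blk : Fin d → Fin m)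
    (f : Euc d → ℝ) (hdiff : Differentiable ℝ f)
    (Q : Fin m → Matrix (Fin d) (Fin d) ℝ) (hpsd : ∀ j, (Q j).PosSemidef)
    (hlip : BlockLip blk f Q) :
    ∀ α : ℝ, 0 < α → ∀ x y : Euc d,
      f y - f x ≤ ⟪gradient f x, y - x⟫ + α / 4 * quadForm (Qtilde blk Q) (y - x)
        + 1 / (2 * α) * ‖y - x‖ ^ 2 := by
  intro α hα x y
  have htelescope : f y - f x = ∑ j : Fin m,
      (f (blockCombine blk j x y) - f (blockCombine blk ((j : ℕ) + 1) x y)) := by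
    rw [Fin.sum_univ_eq_sum_range (fun k => f (blockCombine blk k x y)
      - f (blockCombine blk (k + 1) x y)), Finset.sum_range_sub', blockCombine_zero,
      blockCombine_of_le blk le_rfl]
  calc f y - f x
      ≤ ∑ j : Fin m, (⟪gradient f x, blockMask blk j (y - x)⟫
        + α / 4 * (quadForm (keepGE blk ((j : ℕ) + 1) (Q j)) (y - x)
          + quadForm (keepGE blk ((j : ℕ) + 2) (Q j)) (y - x))
        + 1 / (2 * α) * ‖blockMask blk j (y - x)‖ ^ 2) := by
        rw [htelescope]
        exact Finset.sum_le_sum fun j _ => sub_blockCombine_succ_le hdiff hlip hα j (hpsd j) x y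
    _ = ⟪gradient f x, y - x⟫ + α / 4 * quadForm (Qtilde blk Q) (y - x)
        + 1 / (2 * α) * ‖y - x‖ ^ 2 := by
        simp only [Finset.sum_add_distrib, ← Finset.mul_sum, ← inner_sum, sum_blockMask,
          sum_norm_blockMask_sq, Qtilde, quadForm_sum, quadForm_add]

theorem stmt2 {d m : ℕ} (blk : Fin d → Fin m) (hmono : Monotone blk)
    (hsurj : Function.Surjective blk)
    (f : Euc d → ℝ) (hconv : ConvexOn ℝ Set.univ f) (hdiff : Differentiable ℝ f)
    (Q : Fin m → Matrix (Fin d) (Fin d) ℝ) (hpsd : ∀ j, (Q j).PosSemidef)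
    (hlip : BlockLip blk f Q) :
    ∀ α : ℝ, 0 < α → ∀ x y : Euc d,
      f y - f x ≤ ⟪gradient f x, y - x⟫ + α / 4 * quadForm (Qtilde blk Q) (y - x)
        + 1 / (2 * α) * ‖y - x‖ ^ 2 :=
  stmt2_general blk f hdiff Q hpsd hlip
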